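/- Let σ ∈ (0,1) and let θ ∈ (0,1] be the exponent of the Hölder continuity estimate for h. For every ξ > 0 there exist constants C(ξ) > 0 and t₀(ξ) > 0 such that for all t ≥ t₀(ξ) and all x, y, x₀ ∈ M with d(x₀,y) < ξ: |Q_t^σ(x,y) − Q_t^σ(x,x₀)| ≤ C(ξ) t^{−θ} Q_t^σ(x,x₀). -/

import Mathlib

/-!
Write `Q_t^σ(x, y)` as a positive multiple of `I(y) = ∫₀^∞ h_u(x, y) e^{-t²/4u} u^{-1-σ} du` and
put `A = t² + d(x, x₀)²`. On the window `u ∈ (A, 2A]` the Li–Yau lower bound gives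
`I(x₀) ≳ A^{-σ} / V(x₀, √A)`.

For the difference, every heat-kernel factor `1 / V(w, √u)` with `d(x₀, w) ≤ √A` is compared with
`1 / V(x₀, √A)` by doubling and comparability; the price is a power of `1 + A/u`, which the
Gaussian `e^{-mA/u}` absorbs. Below time `ξ²` both kernels are bounded separately, which is harmless
since `(ξ/√u)^θ ≥ 1` there; above `ξ²` the Hölder estimate applies. So at every time the weighted
difference is at most `(ξ/√u)^θ K e^{-mA/2u} / V(x₀, √A)`, and integrating against `u^{-1-σ}`
yields `Γ(σ + θ/2) (mA/2)^{-σ-θ/2}`: the lower bound times `A^{-θ/2} ≤ t^{-θ}`.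
-/

open MeasureTheory Metric Real Filter

/-- The kernel subordinated to the heat kernel `h`, arising from the
Caffarelli–Silvestre extension problem:
`Q_t^σ(x,y) = (t^{2σ}/(2^{2σ}Γ(σ))) ∫₀^∞ h_u(x,y) e^{-t²/(4u)} u^{-1-σ} du`. -/
noncomputable def Qker {M : Type*} (h : ℝ → M → M → ℝ) (σ t : ℝ) (x y : M) : ℝ :=
  (t ^ (2*σ) / ((2:ℝ) ^ (2*σ) * Real.Gamma σ)) *
    ∫ u in Set.Ioi (0:ℝ), h u x y * Real.exp (-(t^2)/(4*u)) * u ^ (-1-σ)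

open Set

-- The substitution `v = u⁻¹` turns `e^{-B/u} u^{-1-s} du` into the Gamma integrand
-- `v^{s-1} e^{-Bv} dv`.
lemma exp_neg_div_mul_rpow_eqOn_comp_inv {B s : ℝ} :
    EqOn (fun u : ℝ => exp (-B / u) * u ^ (-1 - s))
      (fun u => (|(-1 : ℝ)| * u ^ ((-1 : ℝ) - 1)) •
        ((u ^ (-1 : ℝ)) ^ (s - 1) * exp (-(B * u ^ (-1 : ℝ)))))
      (Ioi 0) := by
  intro u (hu : 0 < u)
  have hpow : u ^ (-1 - s) = u ^ ((-1 : ℝ) - 1) * u ^ (-(s - 1)) := by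
    rw [← rpow_add hu]; ring_nf
  simp only [abs_neg, abs_one, one_mul, smul_eq_mul, rpow_neg_one, inv_rpow hu.le,
    ← rpow_neg hu.le, hpow]
  ring_nf

lemma integrableOn_exp_neg_div_mul_rpow {B s : ℝ} (hB : 0 < B) (hs : 0 < s) :
    IntegrableOn (fun u : ℝ => exp (-B / u) * u ^ (-1 - s)) (Ioi 0) := by
  have hg : IntegrableOn (fun v : ℝ => v ^ (s - 1) * exp (-(B * v))) (Ioi 0) := by
    simpa using integrableOn_rpow_mul_exp_neg_mul_rpow (p := 1) (by linarith) one_pos hB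
  rw [← integrableOn_Ioi_comp_rpow_iff _ (by norm_num : (-1 : ℝ) ≠ 0)] at hg
  exact hg.congr_fun exp_neg_div_mul_rpow_eqOn_comp_inv.symm measurableSet_Ioi

lemma integral_exp_neg_div_mul_rpow {B s : ℝ} (hB : 0 < B) (hs : 0 < s) :
    ∫ u in Ioi 0, exp (-B / u) * u ^ (-1 - s) = Gamma s * B ^ (-s) := by
  have := integral_comp_rpow_Ioi (fun v : ℝ => v ^ (s - 1) * exp (-(B * v)))
    (by norm_num : (-1 : ℝ) ≠ 0)
  rw [setIntegral_congr_fun measurableSet_Ioi exp_neg_div_mul_rpow_eqOn_comp_inv, this,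
    integral_rpow_mul_exp_neg_mul_Ioi hs hB, one_div, inv_rpow hB.le, rpow_neg hB.le, mul_comm]

lemma one_add_rpow_mul_exp_neg_le {p m s : ℝ} (hp : 0 ≤ p) (hm : 0 < m) (hs : 0 ≤ s) :
    (1 + s) ^ p * exp (-(m * s)) ≤ ((p + m) / m) ^ p := by
  set ε := m / (p + m) with hεdef
  have hε : 0 < ε := by positivity
  have hε1 : ε ≤ 1 := (div_le_one (by positivity)).2 (by linarith)
  have hbase : 1 + s ≤ ε⁻¹ * exp (ε * s) := by
    rw [le_inv_mul_iff₀ hε]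
    nlinarith [add_one_le_exp (ε * s)]
  have hpε : p * ε ≤ m := by
    rw [hεdef, mul_div_assoc', div_le_iff₀ (by positivity)]; nlinarith
  calc (1 + s) ^ p * exp (-(m * s)) ≤ (ε⁻¹ * exp (ε * s)) ^ p * exp (-(m * s)) := by
        gcongr
    _ = ε⁻¹ ^ p * exp (-((m - p * ε) * s)) := by
        rw [mul_rpow (by positivity) (by positivity), ← exp_mul, mul_assoc, ← exp_add]
        ring_nf
    _ ≤ ε⁻¹ ^ p := by
        refine mul_le_of_le_one_right (by positivity) (exp_le_one_iff.2 ?_)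
        have : 0 ≤ (m - p * ε) * s := mul_nonneg (by linarith) hs
        linarith
    _ = ((p + m) / m) ^ p := by rw [inv_div]

lemma div_sqrt_rpow_mul_rpow {ξ u θ s : ℝ} (hξ : 0 ≤ ξ) (hu : 0 < u) :
    (ξ / √u) ^ θ * u ^ (-1 - s) = ξ ^ θ * u ^ (-1 - (s + θ / 2)) := by
  rw [div_rpow hξ (sqrt_nonneg u), sqrt_eq_rpow, ← rpow_mul hu.le, div_eq_mul_inv,
    ← rpow_neg hu.le, mul_assoc, ← rpow_add hu]
  ring_nf

lemma rpow_neg_add_half_le {A t θ s : ℝ} (ht : 0 < t) (htA : t ^ 2 ≤ A) (hθ : 0 ≤ θ) :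
    A ^ (-(s + θ / 2)) ≤ t ^ (-θ) * A ^ (-s) := by
  have hA : 0 < A := (by positivity : (0 : ℝ) < t ^ 2).trans_le htA
  rw [neg_add, rpow_add hA, mul_comm]
  gcongr
  rw [show -(θ / 2) = (1 / 2) * -θ by ring, rpow_mul hA.le, ← sqrt_eq_rpow]
  exact rpow_le_rpow_of_nonpos ht (le_sqrt_of_sq_le htA) (by linarith)

section

variable {M : Type*}

lemma min_mul_add_dist_sq_le [MetricSpace M] {c ξ t : ℝ} {x x₀ w : M} (hc : 0 ≤ c)
    (hw : dist x₀ w ≤ ξ) (ht : 8 * c * ξ ^ 2 ≤ t ^ 2) :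
    min (c / 2) (1 / 8) * (t ^ 2 + dist x x₀ ^ 2) ≤ c * dist x w ^ 2 + t ^ 2 / 4 := by
  have htri : dist x x₀ ≤ dist x w + ξ := by
    linarith [dist_triangle x w x₀, dist_comm w x₀]
  have hD : dist x x₀ ^ 2 ≤ 2 * dist x w ^ 2 + 2 * ξ ^ 2 := by
    nlinarith [dist_nonneg (x := x) (y := x₀), sq_nonneg (dist x w - ξ)]
  have h1 := min_le_left (c / 2) (1 / 8)
  have h2 := min_le_right (c / 2) (1 / 8)
  nlinarith [mul_le_mul_of_nonneg_right h1 (sq_nonneg (dist x x₀)),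
    mul_le_mul_of_nonneg_right h2 (sq_nonneg t)]

lemma aestronglyMeasurable_subordinated_integrand [MeasurableSpace M] {h : ℝ → M → M → ℝ}
    (hmeas : Measurable (fun p : ℝ × M × M => h p.1 p.2.1 p.2.2)) (σ t : ℝ) (x w : M) :
    AEStronglyMeasurable (fun u => h u x w * exp (-(t ^ 2) / (4 * u)) * u ^ (-1 - σ))
      (volume.restrict (Ioi 0)) := by
  have : Measurable fun u => h u x w := hmeas.comp (f := fun u : ℝ => (u, x, w)) (by fun_prop)
  exact ((this.mul (by fun_prop)).mul (by fun_prop)).aestronglyMeasurable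

noncomputable def subordinatedIntegral (h : ℝ → M → M → ℝ) (σ t : ℝ) (x y : M) : ℝ :=
  ∫ u in Ioi 0, h u x y * exp (-(t ^ 2) / (4 * u)) * u ^ (-1 - σ)

lemma Qker_eq_mul_subordinatedIntegral (h : ℝ → M → M → ℝ) (σ t : ℝ) (x y : M) :
    Qker h σ t x y = t ^ (2 * σ) / ((2 : ℝ) ^ (2 * σ) * Gamma σ) * subordinatedIntegral h σ t x y :=
  rfl

variable [MetricSpace M] [MeasurableSpace M]

def VolumeDoubling (μ : Measure M) (C ν : ℝ) : Prop :=
  ∀ x r R, 0 < r → r ≤ R → (μ (ball x R)).toReal ≤ C * (R / r) ^ ν * (μ (ball x r)).toReal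

def VolumeComparable (μ : Measure M) (C ν : ℝ) : Prop :=
  ∀ x y r, 0 < r → (μ (ball x r)).toReal ≤ C * (1 + dist x y / r) ^ ν * (μ (ball y r)).toReal

section Volume

variable {μ : Measure M} {C₀ ν : ℝ}

lemma toReal_measure_ball_mono (hV : ∀ x r, 0 < r → 0 < (μ (ball x r)).toReal) (x : M)
    {r R : ℝ} (hR : 0 < R) (hrR : r ≤ R) : (μ (ball x r)).toReal ≤ (μ (ball x R)).toReal :=
  ENNReal.toReal_mono (ENNReal.toReal_pos_iff.1 (hV x R hR)).2.ne
    (measure_mono (ball_subset_ball hrR))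

lemma VolumeDoubling.one_le (hV : ∀ x r, 0 < r → 0 < (μ (ball x r)).toReal)
    (hD : VolumeDoubling μ C₀ ν) (x : M) : 1 ≤ C₀ := by
  have h := hD x 1 1 one_pos le_rfl
  rw [div_one, one_rpow, mul_one] at h
  exact (le_mul_iff_one_le_left (hV x 1 one_pos)).1 h

lemma VolumeDoubling.le_one_add_div (hV : ∀ x r, 0 < r → 0 < (μ (ball x r)).toReal)
    (hD : VolumeDoubling μ C₀ ν) (hC₀ : 1 ≤ C₀) (hν : 0 ≤ ν) (x : M) {r R : ℝ}
    (hr : 0 < r) (hR : 0 < R) :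
    (μ (ball x R)).toReal ≤ C₀ * (1 + R / r) ^ ν * (μ (ball x r)).toReal := by
  have hRr : 0 ≤ R / r := by positivity
  rcases le_total r R with hrR | hRr'
  · calc (μ (ball x R)).toReal ≤ C₀ * (R / r) ^ ν * (μ (ball x r)).toReal := hD x r R hr hrR
      _ ≤ C₀ * (1 + R / r) ^ ν * (μ (ball x r)).toReal := by gcongr; linarith
  · calc (μ (ball x R)).toReal ≤ 1 * 1 * (μ (ball x r)).toReal := by
          simpa using toReal_measure_ball_mono hV x hr hRr'
      _ ≤ C₀ * (1 + R / r) ^ ν * (μ (ball x r)).toReal := by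
          gcongr
          exact one_le_rpow (by linarith) hν

lemma measure_ball_le_of_dist_le (hV : ∀ x r, 0 < r → 0 < (μ (ball x r)).toReal)
    (hD : VolumeDoubling μ C₀ ν) (hcomp : VolumeComparable μ C₀ ν) (hC₀ : 1 ≤ C₀) (hν : 0 ≤ ν)
    {x w : M} {r R : ℝ} (hr : 0 < r) (hR : 0 < R) (hxw : dist x w ≤ R) :
    (μ (ball x R)).toReal ≤ C₀ ^ 2 * ((1 + R / r) ^ ν) ^ 2 * (μ (ball w r)).toReal := by
  calc (μ (ball x R)).toReal ≤ C₀ * (1 + R / r) ^ ν * (μ (ball x r)).toReal :=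
        hD.le_one_add_div hV hC₀ hν x hr hR
    _ ≤ C₀ * (1 + R / r) ^ ν * (C₀ * (1 + dist x w / r) ^ ν * (μ (ball w r)).toReal) := by
        gcongr; exact hcomp x w r hr
    _ ≤ C₀ * (1 + R / r) ^ ν * (C₀ * (1 + R / r) ^ ν * (μ (ball w r)).toReal) := by
        gcongr
    _ = C₀ ^ 2 * ((1 + R / r) ^ ν) ^ 2 * (μ (ball w r)).toReal := by ring

lemma measure_ball_sqrt_le_of_dist_le (hV : ∀ x r, 0 < r → 0 < (μ (ball x r)).toReal)
    (hD : VolumeDoubling μ C₀ ν) (hcomp : VolumeComparable μ C₀ ν) (hC₀ : 1 ≤ C₀) (hν : 0 ≤ ν)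
    {x w : M} {u A : ℝ} (hu : 0 < u) (hA : 0 < A) (hxw : dist x w ≤ √A) :
    (μ (ball x √A)).toReal ≤ C₀ ^ 2 * 2 ^ ν * (1 + A / u) ^ ν * (μ (ball w √u)).toReal := by
  have hsq : (1 + √A / √u) ^ 2 ≤ 2 * (1 + A / u) := by
    rw [← sqrt_div hA.le]
    nlinarith [sq_sqrt (div_nonneg hA.le hu.le), sq_nonneg (√(A / u) - 1)]
  calc (μ (ball x √A)).toReal
      ≤ C₀ ^ 2 * ((1 + √A / √u) ^ ν) ^ 2 * (μ (ball w √u)).toReal :=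
        measure_ball_le_of_dist_le hV hD hcomp hC₀ hν (sqrt_pos.2 hu) (sqrt_pos.2 hA) hxw
    _ = C₀ ^ 2 * ((1 + √A / √u) ^ 2) ^ ν * (μ (ball w √u)).toReal := by
        rw [← rpow_mul_natCast (by positivity), ← rpow_natCast_mul (by positivity),
          mul_comm ν]
    _ ≤ C₀ ^ 2 * (2 * (1 + A / u)) ^ ν * (μ (ball w √u)).toReal := by
        gcongr
    _ = C₀ ^ 2 * 2 ^ ν * (1 + A / u) ^ ν * (μ (ball w √u)).toReal := by
        rw [mul_rpow (by norm_num) (by positivity)]; ring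

lemma exp_div_measure_ball_le (hV : ∀ x r, 0 < r → 0 < (μ (ball x r)).toReal)
    (hD : VolumeDoubling μ C₀ ν) (hcomp : VolumeComparable μ C₀ ν) (hC₀ : 1 ≤ C₀) (hν : 0 ≤ ν)
    {m : ℝ} (hm : 0 < m) : ∃ K > 0, ∀ (x w : M) (u A : ℝ), 0 < u → 0 < A → dist x w ≤ √A →
      exp (-(m * A) / u) / (μ (ball w √u)).toReal ≤
        K * exp (-(m * A / 2) / u) / (μ (ball x √A)).toReal := by
  refine ⟨C₀ ^ 2 * 2 ^ ν * ((ν + m / 2) / (m / 2)) ^ ν, by positivity, ?_⟩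
  intro x w u A hu hA hxw
  have hVw := hV w _ (sqrt_pos.2 hu)
  have hVx := hV x _ (sqrt_pos.2 hA)
  have habsorb : (1 + A / u) ^ ν * exp (-(m / 2 * (A / u))) ≤ ((ν + m / 2) / (m / 2)) ^ ν :=
    one_add_rpow_mul_exp_neg_le hν (by positivity) (by positivity)
  have hsplit : exp (-(m * A) / u) = exp (-(m / 2 * (A / u))) * exp (-(m * A / 2) / u) := by
    rw [← exp_add]; ring_nf
  rw [div_le_div_iff₀ hVw hVx, hsplit]
  calc exp (-(m / 2 * (A / u))) * exp (-(m * A / 2) / u) * (μ (ball x √A)).toReal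
      ≤ exp (-(m / 2 * (A / u))) * exp (-(m * A / 2) / u) *
          (C₀ ^ 2 * 2 ^ ν * (1 + A / u) ^ ν * (μ (ball w √u)).toReal) := by
        gcongr; exact measure_ball_sqrt_le_of_dist_le hV hD hcomp hC₀ hν hu hA hxw
    _ = C₀ ^ 2 * 2 ^ ν * ((1 + A / u) ^ ν * exp (-(m / 2 * (A / u)))) *
          exp (-(m * A / 2) / u) * (μ (ball w √u)).toReal := by ring
    _ ≤ C₀ ^ 2 * 2 ^ ν * ((ν + m / 2) / (m / 2)) ^ ν * exp (-(m * A / 2) / u) *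
          (μ (ball w √u)).toReal := by gcongr

end Volume

def GaussianUpperBound (μ : Measure M) (h : ℝ → M → M → ℝ) (C c : ℝ) : Prop :=
  ∀ u, 0 < u → ∀ x y, h u x y ≤ C / (μ (ball y √u)).toReal * exp (-c * dist x y ^ 2 / u)

def GaussianLowerBound (μ : Measure M) (h : ℝ → M → M → ℝ) (c C : ℝ) : Prop :=
  ∀ u, 0 < u → ∀ x y, c / (μ (ball y √u)).toReal * exp (-C * dist x y ^ 2 / u) ≤ h u x y

def HolderBound (μ : Measure M) (h : ℝ → M → M → ℝ) (θ C c : ℝ) : Prop :=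
  ∀ u, 0 < u → ∀ x y z, dist y z ≤ √u →
    |h u x y - h u x z| ≤ (dist y z / √u) ^ θ * (C / (μ (ball x √u)).toReal) *
      exp (-c * dist x y ^ 2 / u)

section HeatKernel

variable {μ : Measure M} {h : ℝ → M → M → ℝ} {C₀ ν : ℝ}

lemma exp_mul_exp_le {c d m A t u : ℝ} (hu : 0 < u) (hmA : m * A ≤ c * d + t ^ 2 / 4) :
    exp (-c * d / u) * exp (-(t ^ 2) / (4 * u)) ≤ exp (-(m * A) / u) := by
  rw [← exp_add, exp_le_exp, ← sub_nonneg]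
  have : 0 ≤ (c * d + t ^ 2 / 4 - m * A) / u := div_nonneg (by linarith) hu.le
  convert this using 1; field_simp; ring

lemma GaussianUpperBound.mul_exp_le {C c : ℝ} (hup : GaussianUpperBound μ h C c) (hC : 0 < C)
    (hV : ∀ x r, 0 < r → 0 < (μ (ball x r)).toReal) (hD : VolumeDoubling μ C₀ ν)
    (hcomp : VolumeComparable μ C₀ ν) (hC₀ : 1 ≤ C₀) (hν : 0 ≤ ν) {m : ℝ} (hm : 0 < m) :
    ∃ K > 0, ∀ (x w x₀ : M) (t u A : ℝ), 0 < u → 0 < A → dist x₀ w ≤ √A →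
      m * A ≤ c * dist x w ^ 2 + t ^ 2 / 4 →
      h u x w * exp (-(t ^ 2) / (4 * u)) ≤
        K * exp (-(m * A / 2) / u) / (μ (ball x₀ √A)).toReal := by
  obtain ⟨K, hK, hexp⟩ := exp_div_measure_ball_le hV hD hcomp hC₀ hν hm
  refine ⟨C * K, by positivity, fun x w x₀ t u A hu hA hw hmA => ?_⟩
  calc h u x w * exp (-(t ^ 2) / (4 * u))
      ≤ C / (μ (ball w √u)).toReal * exp (-c * dist x w ^ 2 / u) * exp (-(t ^ 2) / (4 * u)) := by
        gcongr; exact hup u hu x w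
    _ = C * (exp (-c * dist x w ^ 2 / u) * exp (-(t ^ 2) / (4 * u)) / (μ (ball w √u)).toReal) := by
        ring
    _ ≤ C * (exp (-(m * A) / u) / (μ (ball w √u)).toReal) := by
        gcongr; exact exp_mul_exp_le hu hmA
    _ ≤ C * (K * exp (-(m * A / 2) / u) / (μ (ball x₀ √A)).toReal) :=
        mul_le_mul_of_nonneg_left (hexp x₀ w u A hu hA hw) hC.le
    _ = C * K * exp (-(m * A / 2) / u) / (μ (ball x₀ √A)).toReal := by ring

lemma HolderBound.mul_exp_le {θ C c : ℝ} (hH : HolderBound μ h θ C c) (hC : 0 < C)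
    (hV : ∀ x r, 0 < r → 0 < (μ (ball x r)).toReal) (hD : VolumeDoubling μ C₀ ν)
    (hcomp : VolumeComparable μ C₀ ν) (hC₀ : 1 ≤ C₀) (hν : 0 ≤ ν) {m : ℝ} (hm : 0 < m) :
    ∃ K > 0, ∀ (x y x₀ : M) (t u A : ℝ), 0 < u → 0 < A → dist x₀ x ≤ √A →
      m * A ≤ c * dist x x₀ ^ 2 + t ^ 2 / 4 → dist x₀ y ≤ √u →
      |h u x x₀ - h u x y| * exp (-(t ^ 2) / (4 * u)) ≤
        (dist x₀ y / √u) ^ θ * (K * exp (-(m * A / 2) / u) / (μ (ball x₀ √A)).toReal) := by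
  obtain ⟨K, hK, hexp⟩ := exp_div_measure_ball_le hV hD hcomp hC₀ hν hm
  refine ⟨C * K, by positivity, fun x y x₀ t u A hu hA hx hmA hy => ?_⟩
  calc |h u x x₀ - h u x y| * exp (-(t ^ 2) / (4 * u))
      ≤ (dist x₀ y / √u) ^ θ * (C / (μ (ball x √u)).toReal) * exp (-c * dist x x₀ ^ 2 / u) *
          exp (-(t ^ 2) / (4 * u)) := by
        gcongr; exact hH u hu x x₀ y hy
    _ = (dist x₀ y / √u) ^ θ * (C * (exp (-c * dist x x₀ ^ 2 / u) *
          exp (-(t ^ 2) / (4 * u)) / (μ (ball x √u)).toReal)) := by ring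
    _ ≤ (dist x₀ y / √u) ^ θ * (C * (exp (-(m * A) / u) / (μ (ball x √u)).toReal)) := by
        gcongr; exact exp_mul_exp_le hu hmA
    _ ≤ (dist x₀ y / √u) ^ θ * (C * (K * exp (-(m * A / 2) / u) / (μ (ball x₀ √A)).toReal)) :=
        mul_le_mul_of_nonneg_left (mul_le_mul_of_nonneg_left (hexp x₀ x u A hu hA hx) hC.le)
          (by positivity)
    _ = (dist x₀ y / √u) ^ θ * (C * K * exp (-(m * A / 2) / u) / (μ (ball x₀ √A)).toReal) := by
        ring

lemma GaussianLowerBound.nonneg {c C : ℝ} (hlow : GaussianLowerBound μ h c C) (hc : 0 ≤ c)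
    (hV : ∀ x r, 0 < r → 0 < (μ (ball x r)).toReal) {u : ℝ} (hu : 0 < u) (x y : M) :
    0 ≤ h u x y := by
  have := hV y _ (sqrt_pos.2 hu)
  exact le_trans (by positivity) (hlow u hu x y)

lemma GaussianLowerBound.mul_exp_ge {c C : ℝ} (hlow : GaussianLowerBound μ h c C) (hc : 0 < c)
    (hC : 0 ≤ C) (hV : ∀ x r, 0 < r → 0 < (μ (ball x r)).toReal) (hD : VolumeDoubling μ C₀ ν)
    (hC₀ : 0 < C₀) (hν : 0 ≤ ν) {x x₀ : M} {t u A : ℝ} (hA : 0 < A) (hAu : A ≤ u)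
    (hu : u ≤ 4 * A) (hxu : dist x x₀ ^ 2 ≤ u) (htu : t ^ 2 ≤ u) :
    c * exp (-C - 1 / 4) / (C₀ * 2 ^ ν * (μ (ball x₀ √A)).toReal) ≤
      h u x x₀ * exp (-(t ^ 2) / (4 * u)) := by
  have hu0 : 0 < u := hA.trans_le hAu
  have hVu := hV x₀ _ (sqrt_pos.2 hu0)
  have hvol : (μ (ball x₀ √u)).toReal ≤ C₀ * 2 ^ ν * (μ (ball x₀ √A)).toReal := by
    calc (μ (ball x₀ √u)).toReal ≤ C₀ * (√u / √A) ^ ν * (μ (ball x₀ √A)).toReal :=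
          hD x₀ √A √u (sqrt_pos.2 hA) (sqrt_le_sqrt hAu)
      _ ≤ C₀ * 2 ^ ν * (μ (ball x₀ √A)).toReal := by
          gcongr
          rw [← sqrt_div hu0.le, sqrt_le_iff]
          exact ⟨by norm_num, by rw [div_le_iff₀ hA]; linarith⟩
  have hexp : exp (-C - 1 / 4) ≤ exp (-C * dist x x₀ ^ 2 / u) * exp (-(t ^ 2) / (4 * u)) := by
    have hx : dist x x₀ ^ 2 / u ≤ 1 := (div_le_one hu0).2 hxu
    have ht : t ^ 2 / u ≤ 1 := (div_le_one hu0).2 htu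
    rw [← exp_add, exp_le_exp]
    calc -C - 1 / 4 ≤ -(C * (dist x x₀ ^ 2 / u)) - t ^ 2 / u / 4 := by
          nlinarith [mul_le_of_le_one_right hC hx]
      _ = -C * dist x x₀ ^ 2 / u + -(t ^ 2) / (4 * u) := by ring
  calc c * exp (-C - 1 / 4) / (C₀ * 2 ^ ν * (μ (ball x₀ √A)).toReal)
      ≤ c * exp (-C - 1 / 4) / (μ (ball x₀ √u)).toReal :=
        div_le_div_of_nonneg_left (by positivity) hVu hvol
    _ ≤ c / (μ (ball x₀ √u)).toReal * (exp (-C * dist x x₀ ^ 2 / u) *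
          exp (-(t ^ 2) / (4 * u))) := by
        rw [mul_div_right_comm]; gcongr
    _ ≤ h u x x₀ * exp (-(t ^ 2) / (4 * u)) := by
        rw [← mul_assoc]; gcongr; exact hlow u hu0 x x₀

lemma abs_heat_sub_mul_exp_le (hh0 : ∀ u, 0 < u → ∀ x y, 0 ≤ h u x y)
    {C₂ c₂ θ CH cH : ℝ} (hup : GaussianUpperBound μ h C₂ c₂) (hC₂ : 0 < C₂) (hc₂ : 0 < c₂)
    (hH : HolderBound μ h θ CH cH) (hCH : 0 < CH) (hcH : 0 < cH) (hθ : 0 ≤ θ)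
    (hV : ∀ x r, 0 < r → 0 < (μ (ball x r)).toReal) (hD : VolumeDoubling μ C₀ ν)
    (hcomp : VolumeComparable μ C₀ ν) (hC₀ : 1 ≤ C₀) (hν : 0 ≤ ν) {ξ : ℝ} (hξ : 0 < ξ) :
    ∃ K > 0, ∃ m > 0, ∃ t₀ > 0, ∀ t, t₀ ≤ t → ∀ x y x₀ : M, dist x₀ y < ξ → ∀ u, 0 < u →
      |h u x y - h u x x₀| * exp (-(t ^ 2) / (4 * u)) ≤
        (ξ / √u) ^ θ * (K * exp (-(m * (t ^ 2 + dist x x₀ ^ 2) / 2) / u) /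
          (μ (ball x₀ √(t ^ 2 + dist x x₀ ^ 2))).toReal) := by
  set c := min c₂ cH
  have hc : 0 < c := lt_min hc₂ hcH
  set m := min (c / 2) (1 / 8)
  have hm : 0 < m := lt_min (by positivity) (by norm_num)
  obtain ⟨K₁, hK₁, hup'⟩ := hup.mul_exp_le hC₂ hV hD hcomp hC₀ hν hm
  obtain ⟨K₂, hK₂, hH'⟩ := hH.mul_exp_le hCH hV hD hcomp hC₀ hν hm
  refine ⟨K₁ + K₂, by positivity, m, hm, (1 + 8 * c) * ξ, by positivity, ?_⟩
  intro t ht x y x₀ hy u hu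
  set A := t ^ 2 + dist x x₀ ^ 2
  have hξt : ξ ≤ t := by nlinarith
  have ht8 : 8 * c * ξ ^ 2 ≤ t ^ 2 := by nlinarith
  have hA : 0 < A := by have := hξ.trans_le hξt; positivity
  have htA : ξ ≤ √A := hξt.trans (le_sqrt_of_sq_le (le_add_of_nonneg_right (sq_nonneg _)))
  have hmA : ∀ w, dist x₀ w ≤ ξ → m * A ≤ c * dist x w ^ 2 + t ^ 2 / 4 :=
    fun w hw => min_mul_add_dist_sq_le hc.le hw ht8
  have hx₀ : dist x₀ x₀ ≤ ξ := by rw [dist_self]; exact hξ.le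
  rcases le_or_gt u (ξ ^ 2) with hsmall | hlarge
  · have hupper : ∀ w, dist x₀ w ≤ ξ → h u x w * exp (-(t ^ 2) / (4 * u)) ≤
        K₁ * exp (-(m * A / 2) / u) / (μ (ball x₀ √A)).toReal := fun w hw =>
      hup' x w x₀ t u A hu hA (hw.trans htA)
        ((hmA w hw).trans (by gcongr; exact min_le_left _ _))
    have hone : 1 ≤ ξ / √u := by
      rw [one_le_div (sqrt_pos.2 hu)]; exact sqrt_le_left hξ.le |>.2 hsmall
    have hF : ∀ w, 0 ≤ h u x w * exp (-(t ^ 2) / (4 * u)) :=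
      fun w => mul_nonneg (hh0 u hu x w) (exp_pos _).le
    calc |h u x y - h u x x₀| * exp (-(t ^ 2) / (4 * u))
        = |h u x y * exp (-(t ^ 2) / (4 * u)) - h u x x₀ * exp (-(t ^ 2) / (4 * u))| := by
          rw [← sub_mul, abs_mul, abs_of_pos (exp_pos _)]
      _ ≤ K₁ * exp (-(m * A / 2) / u) / (μ (ball x₀ √A)).toReal :=
          abs_sub_le_of_nonneg_of_le (hF y) (hupper y hy.le) (hF x₀) (hupper x₀ hx₀)
      _ ≤ (K₁ + K₂) * exp (-(m * A / 2) / u) / (μ (ball x₀ √A)).toReal := by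
          gcongr; linarith
      _ ≤ (ξ / √u) ^ θ * ((K₁ + K₂) * exp (-(m * A / 2) / u) / (μ (ball x₀ √A)).toReal) :=
          le_mul_of_one_le_left (by positivity) (one_le_rpow hone hθ)
  · have hyu : dist x₀ y ≤ √u := hy.le.trans (le_sqrt_of_sq_le hlarge.le)
    have hxA : dist x₀ x ≤ √A :=
      dist_comm x x₀ ▸ le_sqrt_of_sq_le (le_add_of_nonneg_left (sq_nonneg t))
    calc |h u x y - h u x x₀| * exp (-(t ^ 2) / (4 * u))
        = |h u x x₀ - h u x y| * exp (-(t ^ 2) / (4 * u)) := by rw [abs_sub_comm]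
      _ ≤ (dist x₀ y / √u) ^ θ * (K₂ * exp (-(m * A / 2) / u) / (μ (ball x₀ √A)).toReal) :=
          hH' x y x₀ t u A hu hA hxA ((hmA x₀ hx₀).trans (by gcongr; exact min_le_right _ _)) hyu
      _ ≤ (ξ / √u) ^ θ * ((K₁ + K₂) * exp (-(m * A / 2) / u) / (μ (ball x₀ √A)).toReal) := by
          gcongr; linarith

lemma integrableOn_subordinated_integrand
    (hmeas : Measurable (fun p : ℝ × M × M => h p.1 p.2.1 p.2.2))
    (hh0 : ∀ u, 0 < u → ∀ x y, 0 ≤ h u x y) {C c : ℝ} (hup : GaussianUpperBound μ h C c)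
    (hC : 0 < C) (hc : 0 ≤ c) (hV : ∀ x r, 0 < r → 0 < (μ (ball x r)).toReal)
    (hD : VolumeDoubling μ C₀ ν) (hcomp : VolumeComparable μ C₀ ν) (hC₀ : 1 ≤ C₀) (hν : 0 ≤ ν)
    {σ t : ℝ} (hσ : 0 < σ) (ht : 0 < t) (x w : M) :
    IntegrableOn (fun u => h u x w * exp (-(t ^ 2) / (4 * u)) * u ^ (-1 - σ)) (Ioi 0) := by
  obtain ⟨K, hK, hbound⟩ := hup.mul_exp_le hC hV hD hcomp hC₀ hν (m := 1 / 4) (by norm_num)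
  refine Integrable.mono' ((integrableOn_exp_neg_div_mul_rpow (B := 1 / 4 * t ^ 2 / 2)
    (by positivity) hσ).const_mul (K / (μ (ball w √(t ^ 2))).toReal))
    (aestronglyMeasurable_subordinated_integrand hmeas σ t x w) ?_
  filter_upwards [ae_restrict_mem measurableSet_Ioi] with u (hu : 0 < u)
  have hF := hbound x w w t u (t ^ 2) hu (by positivity) (by rw [dist_self]; positivity)
    (by nlinarith [mul_nonneg hc (sq_nonneg (dist x w))])
  rw [norm_of_nonneg (by have := hh0 u hu x w; positivity)]
  calc h u x w * exp (-(t ^ 2) / (4 * u)) * u ^ (-1 - σ)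
      ≤ K * exp (-(1 / 4 * t ^ 2 / 2) / u) / (μ (ball w √(t ^ 2))).toReal * u ^ (-1 - σ) := by
        gcongr
    _ = _ := by ring

lemma subordinatedIntegral_lower_bound {c C : ℝ} (hlow : GaussianLowerBound μ h c C)
    (hc : 0 < c) (hC : 0 ≤ C) (hV : ∀ x r, 0 < r → 0 < (μ (ball x r)).toReal)
    (hD : VolumeDoubling μ C₀ ν) (hC₀ : 0 < C₀) (hν : 0 ≤ ν) {σ : ℝ} (hσ : -1 ≤ σ) :
    ∃ κ > 0, ∀ (t : ℝ) (x x₀ : M), 0 < t →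
      IntegrableOn (fun u => h u x x₀ * exp (-(t ^ 2) / (4 * u)) * u ^ (-1 - σ)) (Ioi 0) →
      κ * ((t ^ 2 + dist x x₀ ^ 2) ^ (-σ) / (μ (ball x₀ √(t ^ 2 + dist x x₀ ^ 2))).toReal) ≤
        subordinatedIntegral h σ t x x₀ := by
  refine ⟨c * exp (-C - 1 / 4) / (C₀ * 2 ^ ν) * 2 ^ (-1 - σ), by positivity,
    fun t x x₀ ht hint => ?_⟩
  set A := t ^ 2 + dist x x₀ ^ 2
  have hA : 0 < A := by positivity
  set L := c * exp (-C - 1 / 4) / (C₀ * 2 ^ ν * (μ (ball x₀ √A)).toReal) * (2 * A) ^ (-1 - σ)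
  have hpt : ∀ u ∈ Ioc A (2 * A), L ≤ h u x x₀ * exp (-(t ^ 2) / (4 * u)) * u ^ (-1 - σ) := by
    rintro u ⟨hAu, hu2A⟩
    have hu0 : 0 < u := hA.trans hAu
    have hxu : dist x x₀ ^ 2 ≤ u := by nlinarith [sq_nonneg t]
    have htu : t ^ 2 ≤ u := by nlinarith [sq_nonneg (dist x x₀)]
    exact mul_le_mul (hlow.mul_exp_ge hc hC hV hD hC₀ hν hA hAu.le (by linarith) hxu htu)
      (rpow_le_rpow_of_nonpos hu0 hu2A (by linarith)) (by positivity)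
      (by have := hlow.nonneg hc.le hV hu0 x x₀; positivity)
  calc _ = L * A := by
        simp only [L]
        rw [show -1 - σ = -σ - 1 by ring, mul_rpow zero_le_two hA.le, rpow_sub_one two_ne_zero,
          rpow_sub_one hA.ne']
        field_simp
    _ = ∫ _ in Ioc A (2 * A), L := by
        rw [setIntegral_const, Real.volume_real_Ioc_of_le (by linarith), smul_eq_mul]; ring
    _ ≤ ∫ u in Ioc A (2 * A), h u x x₀ * exp (-(t ^ 2) / (4 * u)) * u ^ (-1 - σ) :=
        setIntegral_mono_on (integrableOn_const measure_Ioc_lt_top.ne)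
          (hint.mono_set fun u hu => hA.trans hu.1) measurableSet_Ioc hpt
    _ ≤ subordinatedIntegral h σ t x x₀ := by
        refine setIntegral_mono_set hint ?_ (Eventually.of_forall fun u hu => hA.trans hu.1)
        filter_upwards [ae_restrict_mem measurableSet_Ioi] with u (hu : 0 < u)
        have := hlow.nonneg hc.le hV hu x x₀
        positivity

lemma abs_subordinatedIntegral_sub_le
    (hmeas : Measurable (fun p : ℝ × M × M => h p.1 p.2.1 p.2.2))
    (hh0 : ∀ u, 0 < u → ∀ x y, 0 ≤ h u x y)
    {C₂ c₂ θ CH cH : ℝ} (hup : GaussianUpperBound μ h C₂ c₂) (hC₂ : 0 < C₂) (hc₂ : 0 < c₂)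
    (hH : HolderBound μ h θ CH cH) (hCH : 0 < CH) (hcH : 0 < cH) (hθ : 0 ≤ θ)
    (hV : ∀ x r, 0 < r → 0 < (μ (ball x r)).toReal) (hD : VolumeDoubling μ C₀ ν)
    (hcomp : VolumeComparable μ C₀ ν) (hC₀ : 1 ≤ C₀) (hν : 0 ≤ ν) {σ ξ : ℝ} (hσ : 0 < σ)
    (hξ : 0 < ξ) :
    ∃ C t₀, 0 < C ∧ 0 < t₀ ∧ ∀ t, t₀ ≤ t → ∀ x y x₀ : M, dist x₀ y < ξ →
      |subordinatedIntegral h σ t x y - subordinatedIntegral h σ t x x₀| ≤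
        C * t ^ (-θ) * ((t ^ 2 + dist x x₀ ^ 2) ^ (-σ) /
          (μ (ball x₀ √(t ^ 2 + dist x x₀ ^ 2))).toReal) := by
  obtain ⟨K, hK, m, hm, t₀, ht₀, hmaj⟩ :=
    abs_heat_sub_mul_exp_le hh0 hup hC₂ hc₂ hH hCH hcH hθ hV hD hcomp hC₀ hν hξ
  refine ⟨K * ξ ^ θ * Gamma (σ + θ / 2) * (m / 2) ^ (-(σ + θ / 2)), t₀, by positivity, ht₀, ?_⟩
  intro t ht x y x₀ hy
  have ht0 : 0 < t := ht₀.trans_le ht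
  set A := t ^ 2 + dist x x₀ ^ 2
  set V := (μ (ball x₀ √A)).toReal
  have hint := integrableOn_subordinated_integrand hmeas hh0 hup hC₂ hc₂.le hV hD hcomp hC₀ hν
    hσ ht0 x
  have hB : 0 < m * A / 2 := by positivity
  have hs : 0 < σ + θ / 2 := by positivity
  calc |subordinatedIntegral h σ t x y - subordinatedIntegral h σ t x x₀|
      = ‖∫ u in Ioi 0, (h u x y - h u x x₀) * exp (-(t ^ 2) / (4 * u)) * u ^ (-1 - σ)‖ := by
        rw [subordinatedIntegral, subordinatedIntegral, ← integral_sub (hint y) (hint x₀),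
          Real.norm_eq_abs]
        simp only [sub_mul]
    _ ≤ ∫ u in Ioi 0, K * ξ ^ θ / V * (exp (-(m * A / 2) / u) * u ^ (-1 - (σ + θ / 2))) := by
        refine norm_integral_le_of_norm_le
          ((integrableOn_exp_neg_div_mul_rpow hB hs).const_mul _) ?_
        filter_upwards [ae_restrict_mem measurableSet_Ioi] with u (hu : 0 < u)
        rw [norm_mul, norm_mul, Real.norm_eq_abs, norm_of_nonneg (exp_pos _).le,
          norm_of_nonneg (rpow_nonneg hu.le _)]
        calc |h u x y - h u x x₀| * exp (-(t ^ 2) / (4 * u)) * u ^ (-1 - σ)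
            ≤ (ξ / √u) ^ θ * (K * exp (-(m * A / 2) / u) / V) * u ^ (-1 - σ) := by
              exact mul_le_mul_of_nonneg_right (hmaj t ht x y x₀ hy u hu) (rpow_nonneg hu.le _)
          _ = K * ξ ^ θ / V * (exp (-(m * A / 2) / u) * u ^ (-1 - (σ + θ / 2))) := by
              rw [mul_comm ((ξ / √u) ^ θ), mul_assoc, div_sqrt_rpow_mul_rpow hξ.le hu]; ring
    _ = K * ξ ^ θ / V * (Gamma (σ + θ / 2) * (m * A / 2) ^ (-(σ + θ / 2))) := by
        rw [integral_const_mul, integral_exp_neg_div_mul_rpow hB hs]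
    _ ≤ K * ξ ^ θ / V *
          (Gamma (σ + θ / 2) * ((m / 2) ^ (-(σ + θ / 2)) * (t ^ (-θ) * A ^ (-σ)))) := by
        rw [show m * A / 2 = m / 2 * A by ring, mul_rpow (by positivity) (by positivity)]
        gcongr
        exact rpow_neg_add_half_le ht0 (le_add_of_nonneg_right (sq_nonneg _)) hθ
    _ = _ := by ring

end HeatKernel

end

theorem stmt_7_general
    {M : Type*} [MetricSpace M] [MeasurableSpace M]
    (μ : Measure M)
    (hVpos : ∀ (x : M) (r : ℝ), 0 < r → 0 < μ (ball x r))
    (hVfin : ∀ (x : M) (r : ℝ), 0 < r → μ (ball x r) < ⊤)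
    -- volume comparability
    (ν ν' c₀ C₀ : ℝ) (hν' : 0 < ν') (hνν : ν' ≤ ν)
    (hdoub : ∀ (x : M) (r R : ℝ), 0 < r → r ≤ R →
        c₀ * (R/r) ^ ν' ≤ (μ (ball x R)).toReal / (μ (ball x r)).toReal ∧
        (μ (ball x R)).toReal / (μ (ball x r)).toReal ≤ C₀ * (R/r) ^ ν)
    (hcomp : ∀ (x y : M) (r : ℝ), 0 < r →
        (μ (ball x r)).toReal ≤ C₀ * (1 + dist x y / r) ^ ν * (μ (ball y r)).toReal)
    -- heat kernel with Li–Yau two-sided Gaussian estimate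
    (h : ℝ → M → M → ℝ)
    (hhmeas : Measurable (fun p : ℝ × M × M => h p.1 p.2.1 p.2.2))
    (c₁ C₁ c₂ C₂ : ℝ) (hc₁ : 0 < c₁) (hC₁ : 0 < C₁) (hc₂ : 0 < c₂) (hC₂ : 0 < C₂)
    (hLY : ∀ u : ℝ, 0 < u → ∀ x y : M,
        c₁ / (μ (ball y (Real.sqrt u))).toReal * Real.exp (-C₁ * (dist x y)^2 / u) ≤ h u x y ∧
        h u x y ≤ C₂ / (μ (ball y (Real.sqrt u))).toReal * Real.exp (-c₂ * (dist x y)^2 / u))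
    -- Hölder continuity estimate for the heat kernel
    (θ CH cH : ℝ) (hθ0 : 0 < θ) (hCH : 0 < CH) (hcH : 0 < cH)
    (hHolder : ∀ u : ℝ, 0 < u → ∀ x y z : M, dist y z ≤ Real.sqrt u →
        |h u x y - h u x z| ≤ (dist y z / Real.sqrt u) ^ θ *
          (CH / (μ (ball x (Real.sqrt u))).toReal) * Real.exp (-cH * (dist x y)^2 / u))
    (σ : ℝ) (hσ0 : 0 < σ) :
    ∀ ξ : ℝ, 0 < ξ → ∃ Cξ t₀ : ℝ, 0 < Cξ ∧ 0 < t₀ ∧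
      ∀ t : ℝ, t₀ ≤ t → ∀ x y x₀ : M, dist x₀ y < ξ →
        |Qker h σ t x y - Qker h σ t x x₀| ≤ Cξ * t ^ (-θ) * Qker h σ t x x₀ := by
  intro ξ hξ
  -- `1 ≤ C₀` is read off the doubling bound at a point of `M`.
  rcases isEmpty_or_nonempty M with hM | ⟨⟨p⟩⟩
  · exact ⟨1, 1, one_pos, one_pos, fun _ _ x => isEmptyElim x⟩
  have hν : 0 ≤ ν := hν'.le.trans hνν
  have hV : ∀ x r, 0 < r → 0 < (μ (ball x r)).toReal := fun x r hr =>
    ENNReal.toReal_pos (hVpos x r hr).ne' (hVfin x r hr).ne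
  have hD : VolumeDoubling μ C₀ ν := fun x r R hr hrR =>
    (div_le_iff₀ (hV x r hr)).1 (hdoub x r R hr hrR).2
  have hC₀ : 1 ≤ C₀ := hD.one_le hV p
  have hup : GaussianUpperBound μ h C₂ c₂ := fun u hu x y => (hLY u hu x y).2
  have hlow : GaussianLowerBound μ h c₁ C₁ := fun u hu x y => (hLY u hu x y).1
  have hh0 := fun u (hu : 0 < u) => hlow.nonneg hc₁.le hV hu
  obtain ⟨C, t₀, hC, ht₀, hdiff⟩ := abs_subordinatedIntegral_sub_le hhmeas hh0 hup hC₂ hc₂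
    hHolder hCH hcH hθ0.le hV hD hcomp hC₀ hν hσ0 hξ
  obtain ⟨κ, hκ, hlower⟩ :=
    subordinatedIntegral_lower_bound hlow hc₁ hC₁.le hV hD (by linarith) hν (by linarith : -1 ≤ σ)
  refine ⟨C / κ, t₀, by positivity, ht₀, fun t ht x y x₀ hy => ?_⟩
  have ht0 : 0 < t := ht₀.trans_le ht
  have hI := hlower t x x₀ ht0 (integrableOn_subordinated_integrand hhmeas hh0 hup hC₂ hc₂.le
    hV hD hcomp hC₀ hν hσ0 ht0 x x₀)
  have hK : 0 < t ^ (2 * σ) / ((2 : ℝ) ^ (2 * σ) * Gamma σ) := by positivity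
  simp only [Qker_eq_mul_subordinatedIntegral, ← mul_sub, abs_mul, abs_of_pos hK]
  calc _ ≤ _ * (C * t ^ (-θ) * ((t ^ 2 + dist x x₀ ^ 2) ^ (-σ) /
        (μ (ball x₀ √(t ^ 2 + dist x x₀ ^ 2))).toReal)) := by gcongr; exact hdiff t ht x y x₀ hy
    _ ≤ _ * (C * t ^ (-θ) * (subordinatedIntegral h σ t x x₀ / κ)) :=
        mul_le_mul_of_nonneg_left
          (mul_le_mul_of_nonneg_left ((le_div_iff₀' hκ).2 hI) (by positivity)) hK.le
    _ = _ := by ring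

/-- Hölder-type continuity of the subordinated kernel `Q_t^σ` in the second
variable, with rate `t^{-θ}`, where `θ` is the Hölder exponent of the heat kernel. -/
theorem stmt_7
    {M : Type*} [MetricSpace M] [MeasurableSpace M] [BorelSpace M]
    (μ : Measure M)
    (hVpos : ∀ (x : M) (r : ℝ), 0 < r → 0 < μ (ball x r))
    (hVfin : ∀ (x : M) (r : ℝ), 0 < r → μ (ball x r) < ⊤)
    -- volume comparability
    (ν ν' c₀ C₀ : ℝ) (hν' : 0 < ν') (hνν : ν' ≤ ν) (hc₀ : 0 < c₀) (hc₀C₀ : c₀ ≤ C₀)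
    (hdoub : ∀ (x : M) (r R : ℝ), 0 < r → r ≤ R →
        c₀ * (R/r) ^ ν' ≤ (μ (ball x R)).toReal / (μ (ball x r)).toReal ∧
        (μ (ball x R)).toReal / (μ (ball x r)).toReal ≤ C₀ * (R/r) ^ ν)
    (hcomp : ∀ (x y : M) (r : ℝ), 0 < r →
        (μ (ball x r)).toReal ≤ C₀ * (1 + dist x y / r) ^ ν * (μ (ball y r)).toReal)
    -- heat kernel with Li–Yau two-sided Gaussian estimate
    (h : ℝ → M → M → ℝ)
    (hhmeas : Measurable (fun p : ℝ × M × M => h p.1 p.2.1 p.2.2))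
    (hhsym : ∀ u : ℝ, 0 < u → ∀ x y : M, h u x y = h u y x)
    (c₁ C₁ c₂ C₂ : ℝ) (hc₁ : 0 < c₁) (hC₁ : 0 < C₁) (hc₂ : 0 < c₂) (hC₂ : 0 < C₂)
    (hLY : ∀ u : ℝ, 0 < u → ∀ x y : M,
        c₁ / (μ (ball y (Real.sqrt u))).toReal * Real.exp (-C₁ * (dist x y)^2 / u) ≤ h u x y ∧
        h u x y ≤ C₂ / (μ (ball y (Real.sqrt u))).toReal * Real.exp (-c₂ * (dist x y)^2 / u))
    -- Hölder continuity estimate for the heat kernel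
    (θ CH cH : ℝ) (hθ0 : 0 < θ) (hθ1 : θ ≤ 1) (hCH : 0 < CH) (hcH : 0 < cH)
    (hHolder : ∀ u : ℝ, 0 < u → ∀ x y z : M, dist y z ≤ Real.sqrt u →
        |h u x y - h u x z| ≤ (dist y z / Real.sqrt u) ^ θ *
          (CH / (μ (ball x (Real.sqrt u))).toReal) * Real.exp (-cH * (dist x y)^2 / u))
    (σ : ℝ) (hσ0 : 0 < σ) (hσ1 : σ < 1) :
    ∀ ξ : ℝ, 0 < ξ → ∃ Cξ t₀ : ℝ, 0 < Cξ ∧ 0 < t₀ ∧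
      ∀ t : ℝ, t₀ ≤ t → ∀ x y x₀ : M, dist x₀ y < ξ →
        |Qker h σ t x y - Qker h σ t x x₀| ≤ Cξ * t ^ (-θ) * Qker h σ t x x₀ :=
  stmt_7_general μ hVpos hVfin ν ν' c₀ C₀ hν' hνν hdoub hcomp h hhmeas c₁ C₁ c₂ C₂ hc₁ hC₁ hc₂ hC₂
    hLY θ CH cH hθ0 hCH hcH hHolder σ hσ0
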